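/- Let G(E) be a well-formed TFG for (N1,m1) ▷_E (N2,m2) with (N1,m1) a safe (1-bounded) Petri net. Then for every total, well-defined configuration c of G(E) such that the restriction of c to the places of N1 is reachable in (N1,m1), and every non-constant node v of G(E), we have c(v) ∈ {0,1}. -/

import Mathlib

open Finset

/-- A Petri net over a type of places `P`. -/
structure PetriNet (P : Type) where
  Trans : Type
  pre : Trans → P → ℕ
  post : Trans → P → ℕ

/-- Firing relation between markings. -/
def PetriNet.fire {P : Type} (N : PetriNet P) (m m' : P → ℕ) : Prop :=
  ∃ t : N.Trans, (∀ p, N.pre t p ≤ m p) ∧ ∀ p, m' p = m p - N.pre t p + N.post t p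

/-- Reachability of a marking from an initial one. -/
def PetriNet.reach {P : Type} (N : PetriNet P) (m0 m : P → ℕ) : Prop :=
  Relation.ReflTransGen N.fire m0 m

/-- A marked net is safe (1-bounded) when every reachable marking has at most one token per place. -/
def PetriNet.Safe {P : Type} (N : PetriNet P) (m0 : P → ℕ) : Prop :=
  ∀ m, N.reach m0 m → ∀ p, m p ≤ 1

/-- Two places are concurrent when some reachable marking marks both positively. -/
def PetriNet.ConcPlaces {P : Type} (N : PetriNet P) (m0 : P → ℕ) (p q : P) : Prop :=
  ∃ m, N.reach m0 m ∧ 0 < m p ∧ 0 < m q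

/-- A Token Flow Graph: redundancy arcs `R`, agglomeration arcs `A` (disjoint from `R`,
enforced in well-formedness), and constant nodes given by `kval`. -/
structure TFG (V : Type) [DecidableEq V] where
  R : Finset (V × V)
  A : Finset (V × V)
  kval : V → Option ℕ

variable {V : Type} [DecidableEq V]

def TFG.Edge (G : TFG V) (v w : V) : Prop := (v, w) ∈ G.R ∨ (v, w) ∈ G.A

/-- `G.Reach v w` means `v →* w`. -/
def TFG.Reach (G : TFG V) : V → V → Prop := Relation.ReflTransGen G.Edge

/-- Successor set `succ(v)` (includes `v` itself). -/
def TFG.succs (G : TFG V) (v : V) : Set V := {w | G.Reach v w}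

/-- A root has no incoming arc. -/
def TFG.IsRoot (G : TFG V) (v : V) : Prop := ∀ w, ¬ G.Edge w v

/-- A ∘-leaf has no outgoing agglomeration arc. -/
def TFG.IsCircLeaf (G : TFG V) (v : V) : Prop := ∀ w, (v, w) ∉ G.A

/-- The set `X` such that `v ∘→ X` (agglomeration children of `v`). -/
def TFG.aggChildren (G : TFG V) (v : V) : Finset V :=
  (G.A.filter (fun e => e.1 = v)).image Prod.snd

/-- The set `X` such that `X →• v` (redundancy parents of `v`). -/
def TFG.redParents (G : TFG V) (v : V) : Finset V :=
  (G.R.filter (fun e => e.2 = v)).image Prod.fst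

/-- A configuration is a partial valuation of the nodes; it must agree with constant nodes. -/
def TFG.IsConfig (G : TFG V) (c : V → Option ℕ) : Prop :=
  ∀ v n, G.kval v = some n → c v = some n

/-- A configuration is total when it is defined on every node. -/
def TotalConf (c : V → Option ℕ) : Prop := ∀ v, c v ≠ none

/-- Value of a configuration at a node (0 if undefined). -/
def cval (c : V → Option ℕ) (v : V) : ℕ := (c v).getD 0

/-- Well-definedness of a configuration: conditions (CBot) and (CEq). -/
def TFG.WellDef (G : TFG V) (c : V → Option ℕ) : Prop :=
  (∀ v w, G.Edge v w → (c v = none ↔ c w = none)) ∧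
  (∀ v n, c v = some n →
    ((G.aggChildren v).Nonempty → n = ∑ w ∈ G.aggChildren v, cval c w) ∧
    ((G.redParents v).Nonempty → n = ∑ w ∈ G.redParents v, cval c w))

/-- A system of reduction equations: `(v, X)` stands for the equation `v = ∑_{w ∈ X} w`. -/
abbrev EqSys (V : Type) := Finset (V × Finset V)

/-- A (non-negative integer) solution of the system `E`. -/
def Solves (E : EqSys V) (s : V → ℕ) : Prop :=
  ∀ e ∈ E, s e.1 = ∑ w ∈ e.2, s w

/-- `E, ⟦c⟧` is consistent: some solution of `E` extends the partial valuation `c`. -/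
def ConsistentWith (E : EqSys V) (c : V → Option ℕ) : Prop :=
  ∃ s : V → ℕ, Solves E s ∧ ∀ v n, c v = some n → s v = n

/-- Variables occurring in `E`. -/
def fvars (E : EqSys V) : Set V := {v | ∃ e ∈ E, v = e.1 ∨ v ∈ e.2}

/-- View a marking over the set of places `P` as a partial configuration over `V`. -/
def mconf (P : Set V) [DecidablePred (· ∈ P)] (m : ↥P → ℕ) : V → Option ℕ :=
  fun v => if h : v ∈ P then some (m ⟨v, h⟩) else none

/-- Restriction of a configuration to a set of places, seen as a marking. -/
def restrict (c : V → Option ℕ) (P : Set V) : ↥P → ℕ := fun p => cval c ↑p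

/-- Compatibility `c ≡ m` of a configuration with a marking on `P`. -/
def CompatM (c : V → Option ℕ) (P : Set V) (m : ↥P → ℕ) : Prop :=
  ∀ p : ↥P, c ↑p = some (m p)

/-- A solution of `E` agrees with a marking on `P`. -/
def AgreesOn (s : V → ℕ) (P : Set V) (m : ↥P → ℕ) : Prop := ∀ p : ↥P, s ↑p = m p

/-- `E`-equivalence `(N1,m1) ▷_E (N2,m2)`: conditions (A1), (A2), (A3). -/
structure EEquiv (E : EqSys V) (P1 P2 : Set V)
    (N1 : PetriNet ↥P1) (m1 : ↥P1 → ℕ) (N2 : PetriNet ↥P2) (m2 : ↥P2 → ℕ) : Prop where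
  A1l : ∀ m, N1.reach m1 m → ∃ s, Solves E s ∧ AgreesOn s P1 m
  A1r : ∀ m, N2.reach m2 m → ∃ s, Solves E s ∧ AgreesOn s P2 m
  A2 : ∃ s, Solves E s ∧ AgreesOn s P1 m1 ∧ AgreesOn s P2 m2
  A3 : ∀ m1' m2', (∃ s, Solves E s ∧ AgreesOn s P1 m1' ∧ AgreesOn s P2 m2') →
      (N1.reach m1 m1' ↔ N2.reach m2 m2')

/-- Well-formedness of a TFG for an equivalence statement: conditions (T1)–(T6). -/
structure WellFormed (G : TFG V) (E : EqSys V) (P1 P2 : Set V) : Prop where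
  T1 : {v | G.kval v = none} = P1 ∪ P2 ∪ fvars E
  T2 : ∀ v, G.kval v ≠ none → G.IsRoot v
  T3a : ∀ p p' q, (p, q) ∈ G.A → G.Edge p' q → p' = p
  T3b : ∀ p q, ¬((p, q) ∈ G.R ∧ (p, q) ∈ G.A)
  T4 : ∀ v X, ((X = G.aggChildren v ∨ X = G.redParents v) ∧ X.Nonempty) ↔ (v, X) ∈ E
  T5 : ∀ v, ¬ Relation.TransGen G.Edge v v
  T6root : ∀ v, G.kval v = none → (G.IsRoot v ↔ v ∈ P2)
  T6leaf : ∀ v, G.kval v = none → (G.IsCircLeaf v ↔ v ∈ P1)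

/-- Node concurrency relation of the TFG: both nodes are positive in some
total, well-defined configuration whose restriction to `N2` is reachable. -/
def NodeConc (G : TFG V) (P2 : Set V) [DecidablePred (· ∈ P2)]
    (N2 : PetriNet ↥P2) (m2 : ↥P2 → ℕ) (v w : V) : Prop :=
  ∃ c, G.IsConfig c ∧ TotalConf c ∧ G.WellDef c ∧ N2.reach m2 (restrict c P2) ∧
    0 < cval c v ∧ 0 < cval c w

/-!
Send all tokens of `v` down the agglomeration arcs, always to one chosen child, recomputing only
the strict successors of `v`. Every equation of `E` still holds, and since the places of `N2` are
roots they keep their marking; by (A3), applied twice, the new marking of `N1` is reachable like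
the old one. The chain of chosen children ends at a ∘-leaf, i.e. a place of `N1`, which now
carries the `c(v)` tokens of `v`, so safety gives `c(v) ≤ 1`.
-/

open Relation

theorem wellFounded_of_acyclic_of_finite {α : Type*} {r : α → α → Prop} {s : Set α}
    (hs : s.Finite) (hsrc : ∀ a b, r a b → a ∈ s) (hacyc : ∀ a, ¬ TransGen r a a) :
    WellFounded r := by
  classical
  let anc : α → Finset α := fun a => hs.toFinset.filter (TransGen r · a)
  refine Subrelation.wf (r := InvImage (· ⊂ ·) anc) (fun {a b} hab => ?_)
    (InvImage.wf _ wellFounded_lt)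
  refine (ssubset_iff_of_subset fun x hx => ?_).2 ⟨a, ?_, fun ha => ?_⟩
  · simp only [anc, mem_filter] at hx ⊢
    exact ⟨hx.1, hx.2.tail hab⟩
  · simpa [anc] using ⟨hsrc a b hab, TransGen.single hab⟩
  · exact hacyc a (mem_filter.1 ha).2

namespace TFG

variable {V : Type} [DecidableEq V]

def aggParents (G : TFG V) (w : V) : Finset V :=
  (G.A.filter (fun e => e.2 = w)).image Prod.fst

open Classical in
noncomputable def aggChoice (G : TFG V) (u : V) : V :=
  if h : (G.aggChildren u).Nonempty then h.choose else u

variable {G : TFG V} {u v w x : V}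

@[simp] lemma mem_aggChildren : w ∈ G.aggChildren v ↔ (v, w) ∈ G.A := by
  simp [aggChildren]

@[simp] lemma mem_redParents : w ∈ G.redParents v ↔ (w, v) ∈ G.R := by
  simp [redParents]

@[simp] lemma mem_aggParents : w ∈ G.aggParents v ↔ (w, v) ∈ G.A := by
  simp [aggParents]

lemma aggChoice_mem (h : (G.aggChildren u).Nonempty) : G.aggChoice u ∈ G.aggChildren u := by
  classical
  rw [aggChoice, dif_pos h]
  exact h.choose_spec

lemma wellFounded_edge (hacyc : ∀ v, ¬ TransGen G.Edge v v) : WellFounded G.Edge := by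
  refine wellFounded_of_acyclic_of_finite ((G.R ∪ G.A).image Prod.fst).finite_toSet
    (fun a b hab => ?_) hacyc
  simpa using ⟨b, hab⟩

lemma wellFounded_flip_edge (hacyc : ∀ v, ¬ TransGen G.Edge v v) :
    WellFounded (flip G.Edge) := by
  refine wellFounded_of_acyclic_of_finite ((G.R ∪ G.A).image Prod.snd).finite_toSet
    (fun a b hab => ?_) fun a h => hacyc a (transGen_swap.1 h)
  simpa using ⟨b, hab⟩

open Classical in
variable (G) in
/-- The paper's forward token propagation: all tokens leaving `v` follow the chosen
agglomeration children, and only the strict successors of `v` change value. -/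
noncomputable def propagate (hG : WellFounded G.Edge) (s : V → ℕ) (v : V) : V → ℕ :=
  hG.fix fun w rec =>
    if TransGen G.Edge v w then
      ∑ u ∈ (G.redParents w).attach, rec u (Or.inl (mem_redParents.1 u.2)) +
        ∑ u ∈ ((G.aggParents w).filter (G.aggChoice · = w)).attach,
          rec u (Or.inr (mem_aggParents.1 (mem_filter.1 u.2).1))
    else s w

variable {hG : WellFounded G.Edge} {s : V → ℕ}

open Classical in
lemma propagate_eq : G.propagate hG s v w =
    if TransGen G.Edge v w then
      ∑ u ∈ G.redParents w, G.propagate hG s v u +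
        ∑ u ∈ (G.aggParents w).filter (G.aggChoice · = w), G.propagate hG s v u
    else s w := by
  unfold propagate
  rw [WellFounded.fix_eq]
  simp only [sum_attach]

lemma propagate_of_transGen (h : TransGen G.Edge v w) : G.propagate hG s v w =
    ∑ u ∈ G.redParents w, G.propagate hG s v u +
      ∑ u ∈ (G.aggParents w).filter (G.aggChoice · = w), G.propagate hG s v u := by
  rw [propagate_eq, if_pos h]

lemma propagate_of_not_transGen (h : ¬ TransGen G.Edge v w) : G.propagate hG s v w = s w := by
  rw [propagate_eq, if_neg h]

lemma propagate_of_isRoot (hw : G.IsRoot w) : G.propagate hG s v w = s w :=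
  propagate_of_not_transGen fun h => by
    obtain ⟨b, -, hb⟩ := TransGen.tail'_iff.1 h
    exact hw b hb

end TFG

namespace WellFormed

open TFG

variable {V : Type} [DecidableEq V] {G : TFG V} {E : EqSys V} {P1 P2 : Set V}
  {u v w x : V}

lemma kval_eq_none_of_edge (hwf : WellFormed G E P1 P2) (h : G.Edge u w) : G.kval w = none := by
  by_contra hk
  exact hwf.T2 w hk u h

lemma isRoot_of_mem_P2 (hwf : WellFormed G E P1 P2) (hp : v ∈ P2) : G.IsRoot v := by
  have hk : v ∈ {v | G.kval v = none} := hwf.T1 ▸ Or.inl (Or.inr hp)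
  exact (hwf.T6root v hk).2 hp

lemma aggParents_eq_singleton (hwf : WellFormed G E P1 P2) (h : (w, x) ∈ G.A) :
    G.aggParents x = {w} := by
  ext u
  simp only [mem_aggParents, mem_singleton]
  exact ⟨fun hu => hwf.T3a w u x h (Or.inr hu), fun hu => hu ▸ h⟩

lemma redParents_eq_empty (hwf : WellFormed G E P1 P2) (h : (w, x) ∈ G.A) :
    G.redParents x = ∅ := by
  refine eq_empty_of_forall_notMem fun u hu => ?_
  have hR := mem_redParents.1 hu
  obtain rfl := hwf.T3a w u x h (Or.inl hR)
  exact hwf.T3b u x ⟨hR, h⟩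

lemma aggParents_eq_empty (hwf : WellFormed G E P1 P2) (h : (u, w) ∈ G.R) :
    G.aggParents w = ∅ := by
  refine eq_empty_of_forall_notMem fun x hx => ?_
  have hA := mem_aggParents.1 hx
  obtain rfl := hwf.T3a x u w hA (Or.inl h)
  exact hwf.T3b u w ⟨h, hA⟩

lemma transGen_iff_of_mem_A (hwf : WellFormed G E P1 P2) (h : (w, x) ∈ G.A) :
    TransGen G.Edge v x ↔ ReflTransGen G.Edge v w := by
  refine ⟨fun hvx => ?_, fun hvw => TransGen.tail' hvw (Or.inr h)⟩
  obtain ⟨b, hvb, hbx⟩ := TransGen.tail'_iff.1 hvx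
  rwa [hwf.T3a w b x h hbx] at hvb

lemma propagate_of_mem_A (hwf : WellFormed G E P1 P2) {hG : WellFounded G.Edge} {s : V → ℕ}
    (h : (w, x) ∈ G.A) (hvw : ReflTransGen G.Edge v w) :
    G.propagate hG s v x = if G.aggChoice w = x then G.propagate hG s v w else 0 := by
  rw [propagate_of_transGen ((hwf.transGen_iff_of_mem_A h).2 hvw), hwf.redParents_eq_empty h,
    hwf.aggParents_eq_singleton h, sum_empty, zero_add, filter_singleton]
  split_ifs <;> simp

lemma solves_cval (hwf : WellFormed G E P1 P2) {c : V → Option ℕ} (ht : TotalConf c)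
    (hwd : G.WellDef c) : Solves E (cval c) := by
  rintro ⟨w, X⟩ hwX
  obtain ⟨hX, hne⟩ := (hwf.T4 w X).2 hwX
  obtain ⟨n, hn⟩ := Option.ne_none_iff_exists'.1 (ht w)
  have hcw : cval c w = n := by simp [cval, hn]
  rw [hcw]
  rcases hX with rfl | rfl
  exacts [(hwd.2 w n hn).1 hne, (hwd.2 w n hn).2 hne]

theorem solves_propagate (hwf : WellFormed G E P1 P2) (hG : WellFounded G.Edge) {s : V → ℕ}
    (hs : Solves E s) (v : V) : Solves E (G.propagate hG s v) := by
  rintro ⟨w, X⟩ hwX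
  obtain ⟨hX | hX, hne⟩ := (hwf.T4 w X).2 hwX <;> subst hX
  · by_cases hvw : ReflTransGen G.Edge v w
    · rw [sum_congr rfl fun x hx => hwf.propagate_of_mem_A (mem_aggChildren.1 hx) hvw,
        sum_ite_eq, if_pos (aggChoice_mem hne)]
    · have hchild : ∀ x ∈ G.aggChildren w, G.propagate hG s v x = s x := fun x hx =>
        propagate_of_not_transGen (mt (hwf.transGen_iff_of_mem_A (mem_aggChildren.1 hx)).1 hvw)
      rw [sum_congr rfl hchild, propagate_of_not_transGen fun h => hvw h.to_reflTransGen]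
      exact hs _ hwX
  · by_cases hvw : TransGen G.Edge v w
    · obtain ⟨u, hu⟩ := hne
      rw [propagate_of_transGen hvw, hwf.aggParents_eq_empty (mem_redParents.1 hu)]
      simp
    · have hparent : ∀ u ∈ G.redParents w, G.propagate hG s v u = s u := fun u hu =>
        propagate_of_not_transGen fun h => hvw (h.tail (Or.inl (mem_redParents.1 hu)))
      rw [sum_congr rfl hparent, propagate_of_not_transGen hvw]
      exact hs _ hwX

theorem exists_mem_P1_propagate_eq (hwf : WellFormed G E P1 P2) (hG : WellFounded G.Edge)
    (s : V → ℕ) (hu : G.kval u = none) (hvu : ReflTransGen G.Edge v u) :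
    ∃ p ∈ P1, G.propagate hG s v p = G.propagate hG s v u := by
  induction u using (wellFounded_flip_edge hwf.T5).induction with
  | _ u ih =>
  by_cases hu1 : u ∈ P1
  · exact ⟨u, hu1, rfl⟩
  have hne : (G.aggChildren u).Nonempty := by
    have hleaf := mt (hwf.T6leaf u hu).1 hu1
    simp only [IsCircLeaf, not_forall, not_not] at hleaf
    obtain ⟨x, hx⟩ := hleaf
    exact ⟨x, mem_aggChildren.2 hx⟩
  have hA := mem_aggChildren.1 (aggChoice_mem hne)
  obtain ⟨p, hp, hpx⟩ :=
    ih _ (Or.inr hA) (hwf.kval_eq_none_of_edge (Or.inr hA)) (hvu.tail (Or.inr hA))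
  exact ⟨p, hp, by rw [hpx, hwf.propagate_of_mem_A hA hvu, if_pos rfl]⟩

end WellFormed

lemma EEquiv.reach_of_eqOn_right {V : Type} {E : EqSys V} {P1 P2 : Set V}
    {N1 : PetriNet ↥P1} {m1 : ↥P1 → ℕ} {N2 : PetriNet ↥P2} {m2 : ↥P2 → ℕ}
    (heq : EEquiv E P1 P2 N1 m1 N2 m2) {s s' : V → ℕ} (hs : Solves E s) (hs' : Solves E s')
    (hP2 : ∀ p ∈ P2, s' p = s p) (h : N1.reach m1 fun p => s p) :
    N1.reach m1 fun p => s' p :=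
  (heq.A3 _ (fun p => s p) ⟨s', hs', fun _ => rfl, fun p => hP2 p p.2⟩).2
    ((heq.A3 _ _ ⟨s, hs, fun _ => rfl, fun _ => rfl⟩).1 h)

theorem safe_configurations_general {V : Type} [DecidableEq V] (G : TFG V) (E : EqSys V)
    (P1 P2 : Set V)
    (N1 : PetriNet ↥P1) (m1 : ↥P1 → ℕ) (N2 : PetriNet ↥P2) (m2 : ↥P2 → ℕ)
    (hwf : WellFormed G E P1 P2) (heq : EEquiv E P1 P2 N1 m1 N2 m2) (hsafe : N1.Safe m1)
    (c : V → Option ℕ) (ht : TotalConf c) (hwd : G.WellDef c)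
    (hreach : N1.reach m1 (restrict c P1))
    (v : V) (hv : G.kval v = none) :
    cval c v = 0 ∨ cval c v = 1 := by
  have hG := TFG.wellFounded_edge hwf.T5
  have hsol := hwf.solves_cval ht hwd
  have hreach' : N1.reach m1 fun p => G.propagate hG (cval c) v p :=
    heq.reach_of_eqOn_right hsol (hwf.solves_propagate hG hsol v)
      (fun _ hp => TFG.propagate_of_isRoot (hwf.isRoot_of_mem_P2 hp)) hreach
  obtain ⟨p, hp, hpv⟩ := hwf.exists_mem_P1_propagate_eq hG (cval c) hv ReflTransGen.refl
  have hp1 : G.propagate hG (cval c) v p ≤ 1 := hsafe _ hreach' ⟨p, hp⟩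
  rw [hpv, TFG.propagate_of_not_transGen (hwf.T5 v)] at hp1
  omega

theorem safe_configurations {V : Type} [DecidableEq V] (G : TFG V) (E : EqSys V)
    (P1 P2 : Set V) [DecidablePred (· ∈ P1)] [DecidablePred (· ∈ P2)]
    (N1 : PetriNet ↥P1) (m1 : ↥P1 → ℕ) (N2 : PetriNet ↥P2) (m2 : ↥P2 → ℕ)
    (hwf : WellFormed G E P1 P2) (heq : EEquiv E P1 P2 N1 m1 N2 m2) (hsafe : N1.Safe m1)
    (c : V → Option ℕ) (hc : G.IsConfig c) (ht : TotalConf c) (hwd : G.WellDef c)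
    (hreach : N1.reach m1 (restrict c P1))
    (v : V) (hv : G.kval v = none) :
    cval c v = 0 ∨ cval c v = 1 :=
  safe_configurations_general G E P1 P2 N1 m1 N2 m2 hwf heq hsafe c ht hwd hreach v hv
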